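/- arXiv:1612.05178 — 2 statements merged into one kernel-verified Lean document; each statement's English description precedes it below -/
import Mathlib

section
/- Let k ≥ 1, let β_1,…,β_k > 0 and set β = ∑_{i=1}^k β_i. Then there exists a constant C⁻ > 0 such that for every nonempty τ ⊂ {1,…,k} with τ^c ≠ ∅ and every z ∈ (0,∞)^k: ∫_{(0, z_{τ^c})} ‖(z_τ, u)‖₁^{−1−β} ∏_{i ∉ τ} u_i^{−1+β_i} du ≥ C⁻ ‖z_τ‖_∞^{−1−∑_{i∈τ} β_i} ∏_{i ∉ τ} ( min(z_i/‖z_τ‖_∞, 1) )^{β_i}. -/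
/-!
Keep only the sub-box `∏_{j ∉ τ} (0, min(z_j, M))`, where `M = ‖z_τ‖_∞`. On it every component
of `(z_τ, u)` is at most `M`, so `‖(z_τ, u)‖₁ ≤ kM` and the integrand is at least
`(kM)^{-1-β} ∏ u_j^{-1+β_j}`, whose integral over the sub-box is `∏ min(z_j, M)^{β_j} / β_j`.
Writing `min(z_j, M) = M min(z_j/M, 1)` and `∑_{j ∉ τ} β_j = β - ∑_{i ∈ τ} β_i` gives the bound
with `C⁻ = k^{-1-β} ∏_i min(1/β_i, 1)`.
-/

open MeasureTheory Real Set Filter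

noncomputable section

def l1 {k : ℕ} (v : Fin k → ℝ) : ℝ := ∑ i, |v i|

/-- The vector `(z_τ, u)` having components `z i` for `i ∈ τ` and `u i` for `i ∉ τ`. -/
def combine {k : ℕ} (τ : Finset (Fin k)) (z : Fin k → ℝ)
    (u : {i : Fin k // i ∉ τ} → ℝ) : Fin k → ℝ :=
  fun i => if h : i ∈ τ then z i else u ⟨i, h⟩

lemma integral_Ioo_rpow_neg_one_add {b c : ℝ} (hb : 0 < b) (hc : 0 ≤ c) :
    ∫ t in Ioo 0 c, t ^ (-1 + b) = c ^ b / b := by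
  rw [← integral_Ioc_eq_integral_Ioo, ← intervalIntegral.integral_of_le hc,
    integral_rpow (Or.inl (by linarith)), neg_add_cancel_comm, zero_rpow hb.ne', sub_zero]

section Box

variable {ι : Type*} [Fintype ι] {b : ι → ℝ}

lemma integrableOn_pi_Ioo_prod_rpow (hb : ∀ j, 0 < b j) {c : ι → ℝ} (hc : ∀ j, 0 < c j) :
    IntegrableOn (fun u : ι → ℝ => ∏ j, u j ^ (-1 + b j)) (univ.pi fun j => Ioo 0 (c j)) := by
  rw [IntegrableOn, volume_pi, Measure.restrict_pi_pi]
  exact Integrable.fintype_prod fun j =>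
    (intervalIntegral.integrableOn_Ioo_rpow_iff (hc j)).2 (by linarith [hb j])

lemma setIntegral_pi_Ioo_prod_rpow (hb : ∀ j, 0 < b j) {c : ι → ℝ} (hc : ∀ j, 0 < c j) :
    ∫ u in univ.pi (fun j => Ioo 0 (c j)), ∏ j, u j ^ (-1 + b j) = ∏ j, c j ^ b j / b j := by
  rw [volume_pi, Measure.restrict_pi_pi]
  exact (integral_fintype_prod_eq_prod fun j t => t ^ (-1 + b j)).trans <|
    Finset.prod_congr rfl fun j _ => integral_Ioo_rpow_neg_one_add (hb j) (hc j).le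

lemma mul_prod_rpow_div_le_setIntegral_mul_prod_rpow (hb : ∀ j, 0 < b j) {c c' : ι → ℝ}
    (hc' : ∀ j, 0 < c' j) (hc'c : c' ≤ c) {w : (ι → ℝ) → ℝ} (hw : AEStronglyMeasurable w)
    {a B : ℝ} (hw0 : ∀ u, 0 ≤ w u) (hwB : ∀ u, w u ≤ B)
    (ha : ∀ u ∈ univ.pi fun j => Ioo 0 (c' j), a ≤ w u) :
    a * ∏ j, c' j ^ b j / b j
      ≤ ∫ u in univ.pi (fun j => Ioo 0 (c j)), w u * ∏ j, u j ^ (-1 + b j) := by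
  set S := univ.pi fun j => Ioo (0 : ℝ) (c j)
  set S' := univ.pi fun j => Ioo (0 : ℝ) (c' j)
  have hc : ∀ j, 0 < c j := fun j => (hc' j).trans_le (hc'c j)
  have hS'S : S' ⊆ S := pi_mono fun j _ => Ioo_subset_Ioo_right (hc'c j)
  have hp0 : ∀ u ∈ S, 0 ≤ ∏ j, u j ^ (-1 + b j) := fun u hu =>
    Finset.prod_nonneg fun j _ => rpow_nonneg (hu j (mem_univ j)).1.le _
  have hwp : IntegrableOn (fun u => w u * ∏ j, u j ^ (-1 + b j)) S :=
    (integrableOn_pi_Ioo_prod_rpow hb hc).bdd_mul hw.restrict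
      (ae_of_all _ fun u => by rw [norm_of_nonneg (hw0 u)]; exact hwB u)
  calc a * ∏ j, c' j ^ b j / b j = ∫ u in S', a * ∏ j, u j ^ (-1 + b j) := by
        rw [integral_const_mul, setIntegral_pi_Ioo_prod_rpow hb hc']
    _ ≤ ∫ u in S', w u * ∏ j, u j ^ (-1 + b j) :=
        setIntegral_mono_on ((integrableOn_pi_Ioo_prod_rpow hb hc').const_mul a)
          (hwp.mono_set hS'S) (MeasurableSet.univ_pi fun _ => measurableSet_Ioo)
          fun u hu => mul_le_mul_of_nonneg_right (ha u hu) (hp0 u (hS'S hu))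
    _ ≤ ∫ u in S, w u * ∏ j, u j ^ (-1 + b j) :=
        setIntegral_mono_set hwp
          ((ae_restrict_iff' (MeasurableSet.univ_pi fun _ => measurableSet_Ioo)).2
            (ae_of_all _ fun u hu => mul_nonneg (hw0 u) (hp0 u hu)))
          hS'S.eventuallyLE

lemma prod_mul_rpow_div {M : ℝ} (hM : 0 < M) {r : ι → ℝ} (hr : ∀ j, 0 ≤ r j) :
    ∏ j, (M * r j) ^ b j / b j = M ^ (∑ j, b j) * (∏ j, (b j)⁻¹) * ∏ j, r j ^ b j := by
  simp_rw [mul_rpow hM.le (hr _), div_eq_mul_inv, Finset.prod_mul_distrib,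
    rpow_sum_of_pos hM]
  ring

lemma prod_min_inv_one_le_prod_subtype_inv {β : ι → ℝ} (hβ : ∀ i, 0 < β i) (p : ι → Prop)
    [Fintype (Subtype p)] [DecidablePred p] :
    ∏ i, min (β i)⁻¹ 1 ≤ ∏ j : Subtype p, (β j)⁻¹ := by
  have hmin0 : ∀ i, 0 ≤ min (β i)⁻¹ 1 := fun i => le_min (inv_pos.2 (hβ i)).le zero_le_one
  rw [← Finset.prod_subtype (Finset.univ.filter p) (by simp) fun i => (β i)⁻¹]
  calc ∏ i, min (β i)⁻¹ 1 ≤ ∏ i ∈ Finset.univ.filter p, min (β i)⁻¹ 1 :=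
        Finset.prod_le_prod_of_subset_of_le_one (Finset.filter_subset _ _) (fun i _ => hmin0 i)
          fun i _ _ => min_le_right _ _
    _ ≤ ∏ i ∈ Finset.univ.filter p, (β i)⁻¹ :=
        Finset.prod_le_prod (fun i _ => hmin0 i) fun i _ => min_le_left _ _

end Box

lemma sup'_pos {α : Type*} {s : Finset α} (hs : s.Nonempty) {f : α → ℝ}
    (hf : ∀ i ∈ s, 0 < f i) : 0 < s.sup' hs f :=
  let ⟨i, hi⟩ := hs; (Finset.lt_sup'_iff hs).2 ⟨i, hi, hf i hi⟩

section Combine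

variable {k : ℕ} {τ : Finset (Fin k)} {z : Fin k → ℝ}

lemma continuous_l1 : Continuous (l1 : (Fin k → ℝ) → ℝ) := by
  unfold l1; fun_prop

lemma continuous_combine : Continuous (combine τ z) := by
  refine continuous_pi fun i => ?_
  by_cases hi : i ∈ τ
  · simp only [combine, dif_pos hi]; exact continuous_const
  · simp only [combine, dif_neg hi]; exact continuous_apply _

lemma abs_le_l1 (v : Fin k → ℝ) (i : Fin k) : |v i| ≤ l1 v :=
  Finset.single_le_sum (f := fun i => |v i|) (fun _ _ => abs_nonneg _) (Finset.mem_univ i)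

lemma sup'_le_l1_combine (hτ : τ.Nonempty) (u : {i : Fin k // i ∉ τ} → ℝ) :
    τ.sup' hτ z ≤ l1 (combine τ z u) :=
  Finset.sup'_le _ _ fun i hi => (le_abs_self _).trans <| by
    simpa only [combine, dif_pos hi] using abs_le_l1 (combine τ z u) i

lemma l1_combine_le {M : ℝ} (hz : ∀ i ∈ τ, |z i| ≤ M) {u : {i : Fin k // i ∉ τ} → ℝ}
    (hu : ∀ j, |u j| ≤ M) : l1 (combine τ z u) ≤ k * M := by
  calc l1 (combine τ z u) ≤ ∑ _i : Fin k, M := Finset.sum_le_sum fun i _ => by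
        by_cases hi : i ∈ τ
        · simpa only [combine, dif_pos hi] using hz i hi
        · simpa only [combine, dif_neg hi] using hu ⟨i, hi⟩
    _ = k * M := by simp

lemma rpow_mul_prod_le_setIntegral_l1_combine (hτ : τ.Nonempty) (hz : ∀ i, 0 < z i)
    {β : Fin k → ℝ} (hβ : ∀ i, 0 < β i) {e : ℝ} (he : e ≤ 0) :
    ((k : ℝ) * τ.sup' hτ z) ^ e * ∏ j : {i // i ∉ τ}, min (z j) (τ.sup' hτ z) ^ β j / β j
      ≤ ∫ u in univ.pi (fun j : {i // i ∉ τ} => Ioo 0 (z j)),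
          l1 (combine τ z u) ^ e * ∏ j, u j ^ (-1 + β j) := by
  set M := τ.sup' hτ z
  have hM : 0 < M := sup'_pos hτ fun i _ => hz i
  refine mul_prod_rpow_div_le_setIntegral_mul_prod_rpow (w := fun u => l1 (combine τ z u) ^ e)
    (fun j : {i // i ∉ τ} => hβ j) (fun j => lt_min (hz j) hM) (fun j => min_le_left _ _)
    ((continuous_l1.comp continuous_combine).measurable.pow_const _).aestronglyMeasurable
    (fun u => rpow_nonneg (hM.le.trans (sup'_le_l1_combine hτ u)) _)
    (fun u => rpow_le_rpow_of_nonpos hM (sup'_le_l1_combine hτ u) he) fun u hu => ?_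
  refine rpow_le_rpow_of_nonpos (hM.trans_le (sup'_le_l1_combine hτ u))
    (l1_combine_le (fun i hi => ?_) fun j => ?_) he
  · rw [abs_of_pos (hz i)]; exact τ.le_sup' z hi
  · obtain ⟨hu0, hu1⟩ := hu j (mem_univ j)
    rw [abs_of_pos hu0]
    exact hu1.le.trans (min_le_right _ _)

end Combine

/-- lower bound of Lemma 1 of the paper.  For `β₁,…,β_k > 0` and
`β = ∑ βᵢ`, there is `C⁻ > 0` such that for every nonempty `τ ⊊ {1,…,k}` and `z ∈ (0,∞)^k`,
`∫_{(0,z_{τᶜ})} ‖(z_τ,u)‖₁^{−1−β} ∏_{i∉τ} uᵢ^{−1+βᵢ} du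
  ≥ C⁻ ‖z_τ‖_∞^{−1−∑_{i∈τ} βᵢ} ∏_{i∉τ} (min(zᵢ/‖z_τ‖_∞, 1))^{βᵢ}`. -/
theorem stmt4 {k : ℕ} (hk : 1 ≤ k) (β : Fin k → ℝ) (hβ : ∀ i, 0 < β i) :
    ∃ C : ℝ, 0 < C ∧
      ∀ τ : Finset (Fin k), ∀ hτ : τ.Nonempty, τᶜ.Nonempty →
        ∀ z : Fin k → ℝ, (∀ i, 0 < z i) →
          C * (τ.sup' hτ z) ^ (-1 - ∑ i ∈ τ, β i)
              * ∏ j : {i : Fin k // i ∉ τ}, (min (z j.1 / τ.sup' hτ z) 1) ^ (β j.1)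
            ≤ ∫ u in {u : {i : Fin k // i ∉ τ} → ℝ | ∀ j, 0 < u j ∧ u j < z j.1},
                (l1 (combine τ z u)) ^ (-1 - ∑ i, β i)
                  * ∏ j : {i : Fin k // i ∉ τ}, (u j) ^ (-1 + β j.1) := by
  set A := ∑ i, β i
  refine ⟨(k : ℝ) ^ (-1 - A) * ∏ i, min (β i)⁻¹ 1,
    mul_pos (rpow_pos_of_pos (Nat.cast_pos.2 hk) _)
      (Finset.prod_pos fun i _ => lt_min (inv_pos.2 (hβ i)) one_pos), ?_⟩
  intro τ hτ _ z hz
  have hbox : {u : {i : Fin k // i ∉ τ} → ℝ | ∀ j, 0 < u j ∧ u j < z j.1}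
      = univ.pi fun j => Ioo 0 (z j.1) := by
    ext u; simp [Set.mem_pi]
  rw [hbox]
  refine le_trans ?_ (rpow_mul_prod_le_setIntegral_l1_combine hτ hz hβ
    (by linarith [Finset.sum_nonneg fun i (_ : i ∈ Finset.univ) => (hβ i).le]))
  set M := τ.sup' hτ z
  have hM : 0 < M := sup'_pos hτ fun i _ => hz i
  have hr : ∀ j : {i // i ∉ τ}, 0 ≤ min (z j / M) 1 := fun j =>
    le_min (div_pos (hz j) hM).le zero_le_one
  have hmin : ∀ j : {i // i ∉ τ}, min (z j) M = M * min (z j / M) 1 := fun j => by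
    rw [mul_min_of_nonneg _ _ hM.le, mul_div_cancel₀ _ hM.ne', mul_one]
  have hsum : ∑ j : {i // i ∉ τ}, β j = A - ∑ i ∈ τ, β i := by
    rw [← Finset.sum_subtype τᶜ (fun _ => Finset.mem_compl) β, eq_sub_iff_add_eq,
      Finset.sum_compl_add_sum]
  calc _ ≤ (k : ℝ) ^ (-1 - A) * (∏ j : {i // i ∉ τ}, (β j)⁻¹) * M ^ (-1 - ∑ i ∈ τ, β i)
          * ∏ j : {i // i ∉ τ}, min (z j / M) 1 ^ β j := by
        gcongr
        · exact Finset.prod_nonneg fun j _ => rpow_nonneg (hr j) _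
        · exact prod_min_inv_one_le_prod_subtype_inv hβ _
    _ = _ := by
        simp_rw [hmin]
        rw [prod_mul_rpow_div hM hr, mul_rpow (Nat.cast_nonneg k) hM.le, hsum,
          show -1 - ∑ i ∈ τ, β i = -1 - A + (A - ∑ i ∈ τ, β i) by ring, rpow_add hM]
        ring

end
end

section
/- For a positive definite k × k correlation matrix Σ and ν > 0, let h_{Σ,ν}(w) = C(Σ,ν) · ( (w^{1/ν})ᵀ Σ^{−1} w^{1/ν} )^{−(k+ν)/2} · ∏_{i=1}^k w_i^{(1−ν)/ν} on int(S^{k−1}), where C(Σ,ν) = π^{(1−k)/2} Γ((ν+1)/2)^{−1} Γ((k+ν)/2) ν^{−k+1} det(Σ)^{−1/2}. Then the partial derivative ∂_ν h_{Σ,ν}(w) exists and for every ε > 0 there is a function C₄(Σ,ν) > 0, continuous in (Σ,ν), such that for all such (Σ,ν) and all w ∈ int(S^{k−1}): |∂_ν h_{Σ,ν}(w)| ≤ (C₄(Σ,ν)/ε) ∏_{i=1}^k w_i^{(1−ν)/ν − ε}. -/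
open MeasureTheory Real Set Filter Matrix

noncomputable section

/-- The interior of the unit simplex `S^{k−1}`. -/
def intSimplex (k : ℕ) : Set (Fin k → ℝ) := {w | (∀ i, 0 < w i) ∧ ∑ i, w i = 1}

/-- The normalizing constant of the extremal-t angular density:
`C(Σ,ν) = π^{(1−k)/2} Γ((ν+1)/2)⁻¹ Γ((k+ν)/2) ν^{−k+1} det(Σ)^{−1/2}`. -/
noncomputable def extTConst (k : ℕ) (S : Matrix (Fin k) (Fin k) ℝ) (ν : ℝ) : ℝ :=
  Real.pi ^ ((1 - (k : ℝ)) / 2) * (Real.Gamma ((ν + 1) / 2))⁻¹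
    * Real.Gamma (((k : ℝ) + ν) / 2) * ν ^ (-(k : ℝ) + 1) * S.det ^ (-(1 : ℝ) / 2)

/-- The extremal-t angular density on the interior of the simplex:
`h_{Σ,ν}(w) = C(Σ,ν) ((w^{1/ν})ᵀ Σ⁻¹ w^{1/ν})^{−(k+ν)/2} ∏ᵢ wᵢ^{(1−ν)/ν}`. -/
noncomputable def hExtT {k : ℕ} (S : Matrix (Fin k) (Fin k) ℝ) (ν : ℝ) (w : Fin k → ℝ) : ℝ :=
  extTConst k S ν
    * ((fun i => (w i) ^ (1/ν)) ⬝ᵥ (S⁻¹ *ᵥ fun i => (w i) ^ (1/ν))) ^ (-((k : ℝ) + ν) / 2)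
    * ∏ i, (w i) ^ ((1 - ν) / ν)

/-- The parameter set of the extremal-t model: positive definite correlation matrices `Σ`
together with `ν > 0`. -/
def extTParams (k : ℕ) : Set (Matrix (Fin k) (Fin k) ℝ × ℝ) :=
  {p | p.1.PosDef ∧ (∀ i, p.1 i i = 1) ∧ 0 < p.2}

/-!
Write `h_{Σ,t}(w) = A(t) · Q(t)^{-(k+t)/2} · W^{(1-t)/t}` with `A(t) = C(Σ,t)`,
`Q(t) = (w^{1/t})ᵀ Σ⁻¹ w^{1/t}` and `W = ∏ᵢ wᵢ`, and differentiate by the product rule.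
`A` is `C¹` in `t` because `Γ` is smooth on `(0, ∞)`. Since `0 < wᵢ ≤ 1`, the vector
`v = w^{1/t}` has entries in `(0, 1]` and `|∂ₜ vᵢ| ≤ 1/t`; hence `Q` and `|Q'|` are bounded above
by sums of `|Σ⁻¹ᵢⱼ|`, while Cauchy–Schwarz `(v·v)² ≤ (vᵀΣ⁻¹v)(vᵀΣv)` together with a coordinate
`w_j ≥ 1/(k+1)` bounds `Q` below. So `A`, `A'`, `Q^{-(k+t)/2}` and its derivative are bounded by
continuous functions of `(Σ, ν)`. The only factor that blows up at the boundary of the simplex is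
`log W`, coming from `∂ₜ W^{(1-t)/t}`, and `-log W ≤ W^{-ε}/ε` trades it for the loss of `ε` in the
exponent.
-/

theorem Real.contDiffOn_Gamma_Ioi (n : WithTop ℕ∞) : ContDiffOn ℝ n Real.Gamma (Ioi 0) := by
  have hC : ContDiffOn ℂ n Complex.Gamma {z | 0 < z.re} := by
    refine DifferentiableOn.contDiffOn (fun z hz => ?_)
      (isOpen_lt continuous_const Complex.continuous_re)
    refine (Complex.differentiableAt_Gamma z fun m hm => ?_).differentiableWithinAt
    have : (0 : ℝ) < z.re := hz
    simp only [hm, Complex.neg_re, Complex.natCast_re] at this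
    linarith [(m.cast_nonneg : (0 : ℝ) ≤ m)]
  have hR : ContDiffOn ℝ n (fun x : ℝ => (Complex.Gamma x).re) (Ioi 0) :=
    Complex.reCLM.contDiff.comp_contDiffOn ((hC.restrict_scalars ℝ).comp
      Complex.ofRealCLM.contDiff.contDiffOn fun x hx => by simpa using hx)
  exact hR.congr fun x _ => by simp [Complex.Gamma_ofReal]

lemma Real.hasDerivAt_rpow_one_div {x ν : ℝ} (hx : 0 < x) (hν : ν ≠ 0) :
    HasDerivAt (fun t => x ^ (1 / t)) (-(x ^ (1 / ν) * log x) / ν ^ 2) ν := by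
  have hinv : HasDerivAt (fun t : ℝ => 1 / t) (-(ν ^ 2)⁻¹) ν := by
    simpa only [one_div] using hasDerivAt_inv hν
  convert (hasDerivAt_const ν x).rpow hinv hx using 1
  ring

lemma Real.hasDerivAt_rpow_one_sub_div {x ν : ℝ} (hx : 0 < x) (hν : ν ≠ 0) :
    HasDerivAt (fun t => x ^ ((1 - t) / t)) (-(x ^ ((1 - ν) / ν) * log x) / ν ^ 2) ν := by
  have hr : HasDerivAt (fun t : ℝ => (1 - t) / t) (-(ν ^ 2)⁻¹) ν :=
    (((hasDerivAt_id' ν).const_sub 1).fun_div (hasDerivAt_id' ν) hν).congr_deriv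
      (by field_simp; ring)
  convert (hasDerivAt_const ν x).rpow hr hx using 1
  ring

lemma Real.abs_rpow_one_div_mul_log_div_le {x ν : ℝ} (hx0 : 0 < x) (hx1 : x ≤ 1)
    (hν : 0 < ν) : |-(x ^ (1 / ν) * log x) / ν ^ 2| ≤ 1 / ν := by
  have h := Real.abs_log_mul_self_rpow_lt x (1 / ν) hx0 hx1 (by positivity)
  rw [one_div_one_div] at h
  rw [abs_div, abs_neg, mul_comm, abs_of_pos (by positivity : 0 < ν ^ 2),
    div_le_div_iff₀ (by positivity) hν]
  nlinarith

lemma Real.rpow_mul_abs_log_le {x r ε : ℝ} (hx0 : 0 < x) (hx1 : x ≤ 1) (hε : 0 < ε) :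
    x ^ r * |log x| ≤ x ^ (r - ε) / ε := by
  have h := Real.log_le_rpow_div (inv_nonneg.2 hx0.le) hε
  rw [Real.log_inv, Real.inv_rpow hx0.le, ← Real.rpow_neg hx0.le] at h
  rw [abs_of_nonpos (Real.log_nonpos hx0.le hx1), sub_eq_add_neg, Real.rpow_add hx0,
    mul_div_assoc]
  exact mul_le_mul_of_nonneg_left h (by positivity)

lemma abs_rpow_deriv_le {q q' e e' a b : ℝ} (ha : 0 < a) (haq : a ≤ q) (hqb : q ≤ b)
    (he : e ≤ 0) :
    |q' * e * q ^ (e - 1) + e' * q ^ e * log q|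
      ≤ |q'| * |e| * a ^ (e - 1) + |e'| * a ^ e * (|log a| + |log b|) := by
  have hq := ha.trans_le haq
  have hlog : |log q| ≤ |log a| + |log b| := by
    have h₁ := Real.log_le_log ha haq
    have h₂ := Real.log_le_log hq hqb
    rw [abs_le]
    constructor <;> linarith [neg_abs_le (log a), le_abs_self (log b), abs_nonneg (log a),
      abs_nonneg (log b)]
  have h₁ := Real.rpow_le_rpow_of_nonpos ha haq (by linarith : e - 1 ≤ 0)
  have h₂ := Real.rpow_le_rpow_of_nonpos ha haq he
  calc _ ≤ |q' * e * q ^ (e - 1)| + |e' * q ^ e * log q| := abs_add_le _ _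
    _ = |q'| * |e| * q ^ (e - 1) + |e'| * q ^ e * |log q| := by
      simp only [abs_mul, abs_of_pos (Real.rpow_pos_of_pos hq _)]
    _ ≤ _ := by
      gcongr ?_ + ?_
      · exact mul_le_mul_of_nonneg_left h₁ (by positivity)
      · exact mul_le_mul (mul_le_mul_of_nonneg_left h₂ (abs_nonneg _)) hlog (abs_nonneg _)
          (by positivity)

lemma abs_deriv_mul_mul_le {a a' b b' c c' β β' γ γ' : ℝ} (ha : 0 ≤ a) (hb : 0 ≤ b)
    (hbβ : b ≤ β) (hb' : |b'| ≤ β') (hc : 0 ≤ c) (hcγ : c ≤ γ) (hc' : |c'| ≤ γ') :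
    |(a' * b + a * b') * c + a * b * c'| ≤ (|a'| * β + a * β') * γ + a * β * γ' := by
  calc _ ≤ (|a'| * b + a * |b'|) * c + a * b * |c'| := by
        refine (abs_add_le _ _).trans (add_le_add ?_ ?_)
        · rw [abs_mul, abs_of_nonneg hc]
          refine mul_le_mul_of_nonneg_right ((abs_add_le _ _).trans_eq ?_) hc
          rw [abs_mul, abs_mul, abs_of_nonneg ha, abs_of_nonneg hb]
        · rw [abs_mul, abs_mul, abs_of_nonneg ha, abs_of_nonneg hb]
    _ ≤ _ := by
      have hβ := hb.trans hbβ
      have hβ' := (abs_nonneg _).trans hb'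
      have := add_nonneg (mul_nonneg (abs_nonneg a') hβ) (mul_nonneg ha hβ')
      have := mul_nonneg ha hβ
      have := (abs_nonneg _).trans hc'
      gcongr

lemma Matrix.abs_dotProduct_mulVec_le {ι : Type*} [Fintype ι] (M : Matrix ι ι ℝ)
    {a b : ι → ℝ} {α β : ℝ} (ha : ∀ i, |a i| ≤ α) (hb : ∀ j, |b j| ≤ β) :
    |a ⬝ᵥ (M *ᵥ b)| ≤ α * β * ∑ i, ∑ j, |M i j| := by
  simp only [dotProduct, mulVec, Finset.mul_sum]
  refine (Finset.abs_sum_le_sum_abs _ _).trans (Finset.sum_le_sum fun i _ =>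
    (Finset.abs_sum_le_sum_abs _ _).trans (Finset.sum_le_sum fun j _ => ?_))
  have := (abs_nonneg (a i)).trans (ha i)
  calc |a i * (M i j * b j)| = |a i| * (|M i j| * |b j|) := by simp only [abs_mul]
    _ ≤ α * (|M i j| * β) := by gcongr; exacts [ha i, hb j]
    _ = α * β * |M i j| := by ring

lemma Matrix.PosDef.sq_dotProduct_le {ι : Type*} [Fintype ι] [DecidableEq ι]
    {S : Matrix ι ι ℝ} (hS : S.PosDef) (v : ι → ℝ) :
    (v ⬝ᵥ v) ^ 2 ≤ (v ⬝ᵥ (S⁻¹ *ᵥ v)) * (v ⬝ᵥ (S *ᵥ v)) := by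
  have hSym : Sᵀ = S := by simpa using hS.isHermitian.eq
  have hdet := S.isUnit_iff_isUnit_det.mp hS.isUnit
  have hdot (x y : ι → ℝ) : Matrix.toLinearMap₂' ℝ S⁻¹ x y = x ⬝ᵥ (S⁻¹ *ᵥ y) :=
    Matrix.toLinearMap₂'_apply' _ _ _
  have hSv (x : ι → ℝ) : (S *ᵥ v) ⬝ᵥ x = v ⬝ᵥ (S *ᵥ x) := by
    rw [dotProduct_comm, dotProduct_mulVec, ← mulVec_transpose, hSym, dotProduct_comm]
  -- Cauchy–Schwarz for the form `⟨x, y⟩ = xᵀ Σ⁻¹ y` at `x = v`, `y = Σ v`.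
  have hCS := LinearMap.BilinForm.apply_mul_apply_le_of_forall_zero_le
    (Matrix.toLinearMap₂' ℝ S⁻¹) (fun x => by
      rw [hdot]; simpa using hS.inv.posSemidef.dotProduct_mulVec_nonneg x) v (S *ᵥ v)
  simp only [hdot, mulVec_mulVec, S.nonsing_inv_mul hdet, S.mul_nonsing_inv hdet, one_mulVec,
    hSv] at hCS
  rwa [sq]

theorem HasDerivAt.dotProduct_mulVec {ι : Type*} [Fintype ι] {u v : ℝ → ι → ℝ}
    {u' v' : ι → ℝ} {x : ℝ} (hu : ∀ i, HasDerivAt (fun t => u t i) (u' i) x)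
    (hv : ∀ i, HasDerivAt (fun t => v t i) (v' i) x) (M : Matrix ι ι ℝ) :
    HasDerivAt (fun t => u t ⬝ᵥ (M *ᵥ v t)) (u' ⬝ᵥ (M *ᵥ v x) + u x ⬝ᵥ (M *ᵥ v')) x := by
  simp only [dotProduct, mulVec, ← Finset.sum_add_distrib]
  exact HasDerivAt.fun_sum fun i _ => ((hu i).mul (HasDerivAt.fun_sum fun j _ =>
    (hv j).const_mul (M i j))).congr_deriv (by ring)

lemma continuousAt_inv_fst {n : ℕ} {X : Type*} [TopologicalSpace X]
    {p : Matrix (Fin n) (Fin n) ℝ × X} (hp : p.1.det ≠ 0) :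
    ContinuousAt (fun q : Matrix (Fin n) (Fin n) ℝ × X => q.1⁻¹) p :=
  (continuousAt_matrix_inv p.1 (by rw [Ring.inverse_eq_inv']; exact continuousAt_inv₀ hp)).comp
    continuousAt_fst

section ExtremalT

variable {k : ℕ}

lemma le_one_of_mem_intSimplex {w : Fin k → ℝ} (hw : w ∈ intSimplex k) (i : Fin k) :
    w i ≤ 1 :=
  hw.2 ▸ Finset.single_le_sum (fun j _ => (hw.1 j).le) (Finset.mem_univ i)

lemma exists_inv_succ_le_of_mem_intSimplex {w : Fin k → ℝ} (hw : w ∈ intSimplex k) :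
    ∃ i, ((k : ℝ) + 1)⁻¹ ≤ w i := by
  by_contra! h
  have hsum := Finset.sum_le_sum fun i (_ : i ∈ Finset.univ) => (h i).le
  rw [hw.2, Finset.sum_const, Finset.card_univ, Fintype.card_fin, nsmul_eq_mul,
    ← div_eq_mul_inv, le_div_iff₀ (by positivity)] at hsum
  linarith

def extTNuFactor (k : ℕ) (ν : ℝ) : ℝ :=
  Real.pi ^ ((1 - (k : ℝ)) / 2) * (Real.Gamma ((ν + 1) / 2))⁻¹
    * Real.Gamma (((k : ℝ) + ν) / 2) * ν ^ (-(k : ℝ) + 1)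

lemma extTConst_eq_mul (S : Matrix (Fin k) (Fin k) ℝ) (ν : ℝ) :
    extTConst k S ν = extTNuFactor k ν * S.det ^ (-(1 : ℝ) / 2) := rfl

lemma extTConst_pos {S : Matrix (Fin k) (Fin k) ℝ} (hS : S.PosDef) {ν : ℝ} (hν : 0 < ν) :
    0 < extTConst k S ν := by
  have h₁ := Real.Gamma_pos_of_pos (by positivity : 0 < (ν + 1) / 2)
  have h₂ := Real.Gamma_pos_of_pos (by positivity : 0 < ((k : ℝ) + ν) / 2)
  have h₃ := hS.det_pos
  rw [extTConst]; positivity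

lemma contDiffOn_extTNuFactor (k : ℕ) : ContDiffOn ℝ 1 (extTNuFactor k) (Ioi 0) := by
  have hΓ := Real.contDiffOn_Gamma_Ioi 1
  have h₁ : ContDiffOn ℝ 1 (fun t : ℝ => Real.Gamma ((t + 1) / 2)) (Ioi 0) :=
    hΓ.comp (by fun_prop) fun t (ht : 0 < t) => show 0 < (t + 1) / 2 by positivity
  have h₂ : ContDiffOn ℝ 1 (fun t : ℝ => Real.Gamma (((k : ℝ) + t) / 2)) (Ioi 0) :=
    hΓ.comp (by fun_prop) fun t (ht : 0 < t) => show 0 < ((k : ℝ) + t) / 2 by positivity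
  have h₃ : ContDiffOn ℝ 1 (fun t : ℝ => t ^ (-(k : ℝ) + 1)) (Ioi 0) :=
    contDiffOn_id.rpow_const_of_ne fun t (ht : 0 < t) => ht.ne'
  exact ((contDiffOn_const.mul (h₁.inv fun t (ht : 0 < t) =>
    (Real.Gamma_pos_of_pos (by positivity)).ne')).mul h₂).mul h₃

lemma hasDerivAt_extTConst (S : Matrix (Fin k) (Fin k) ℝ) {ν : ℝ} (hν : 0 < ν) :
    HasDerivAt (fun t => extTConst k S t)
      (deriv (extTNuFactor k) ν * S.det ^ (-(1 : ℝ) / 2)) ν :=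
  (((contDiffOn_extTNuFactor k).contDiffAt (Ioi_mem_nhds hν)).differentiableAt
    one_ne_zero).hasDerivAt.mul_const _

def extTQuad (S : Matrix (Fin k) (Fin k) ℝ) (w : Fin k → ℝ) (t : ℝ) : ℝ :=
  (fun i => w i ^ (1 / t)) ⬝ᵥ (S⁻¹ *ᵥ fun i => w i ^ (1 / t))

/- The summands `1 +` and the `k + 1` (rather than `k`) keep both bounds positive and continuous
in `(Σ, ν)` also for `k = 0`. -/
def extTQuadUpper (S : Matrix (Fin k) (Fin k) ℝ) : ℝ := 1 + ∑ i, ∑ j, |S⁻¹ i j|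

def extTQuadLower (S : Matrix (Fin k) (Fin k) ℝ) (ν : ℝ) : ℝ :=
  (((k : ℝ) + 1)⁻¹ ^ (1 / ν)) ^ 4 / (1 + ∑ i, ∑ j, |S i j|)

def extTQuadRpowBound (S : Matrix (Fin k) (Fin k) ℝ) (ν : ℝ) : ℝ :=
  extTQuadLower S ν ^ (-((k : ℝ) + ν) / 2)

def extTQuadRpowDerivBound (S : Matrix (Fin k) (Fin k) ℝ) (ν : ℝ) : ℝ :=
  2 / ν * extTQuadUpper S * (((k : ℝ) + ν) / 2) * extTQuadLower S ν ^ (-((k : ℝ) + ν) / 2 - 1)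
    + 1 / 2 * extTQuadRpowBound S ν * (|log (extTQuadLower S ν)| + |log (extTQuadUpper S)|)

def extTDerivConst (k : ℕ) (ε : ℝ) (p : Matrix (Fin k) (Fin k) ℝ × ℝ) : ℝ :=
  ε * (|deriv (extTNuFactor k) p.2 * p.1.det ^ (-(1 : ℝ) / 2)| * extTQuadRpowBound p.1 p.2
      + extTConst k p.1 p.2 * extTQuadRpowDerivBound p.1 p.2)
    + extTConst k p.1 p.2 * extTQuadRpowBound p.1 p.2 / p.2 ^ 2

lemma extTQuadLower_pos (S : Matrix (Fin k) (Fin k) ℝ) (ν : ℝ) : 0 < extTQuadLower S ν := by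
  rw [extTQuadLower]; positivity

section Estimates

variable {S : Matrix (Fin k) (Fin k) ℝ} {w : Fin k → ℝ} {ν : ℝ}

lemma abs_rpow_one_div_le_one (hw : w ∈ intSimplex k) (hν : 0 < ν) (i : Fin k) :
    |w i ^ (1 / ν)| ≤ 1 := by
  rw [abs_of_pos (Real.rpow_pos_of_pos (hw.1 i) _)]
  exact Real.rpow_le_one (hw.1 i).le (le_one_of_mem_intSimplex hw i) (by positivity)

lemma extTQuad_le_extTQuadUpper (hw : w ∈ intSimplex k) (hν : 0 < ν) :
    extTQuad S w ν ≤ extTQuadUpper S := by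
  have h := S⁻¹.abs_dotProduct_mulVec_le (abs_rpow_one_div_le_one hw hν)
    (abs_rpow_one_div_le_one hw hν)
  rw [extTQuadUpper, extTQuad]
  linarith [le_abs_self ((fun i => w i ^ (1 / ν)) ⬝ᵥ (S⁻¹ *ᵥ fun i => w i ^ (1 / ν)))]

lemma extTQuadLower_le_extTQuad (hS : S.PosDef) (hw : w ∈ intSimplex k) (hν : 0 < ν) :
    extTQuadLower S ν ≤ extTQuad S w ν := by
  set v : Fin k → ℝ := fun i => w i ^ (1 / ν)
  obtain ⟨j, hj⟩ := exists_inv_succ_le_of_mem_intSimplex hw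
  have hv0 i : 0 < v i := Real.rpow_pos_of_pos (hw.1 i) _
  have hvj : ((k : ℝ) + 1)⁻¹ ^ (1 / ν) ≤ v j :=
    Real.rpow_le_rpow (by positivity) hj (by positivity)
  have hvv : v j ^ 2 ≤ v ⬝ᵥ v := by
    rw [sq]
    exact Finset.single_le_sum (f := fun i => v i * v i)
      (fun i _ => (mul_self_pos.2 (hv0 i).ne').le) (Finset.mem_univ j)
  have hvSv : 0 < v ⬝ᵥ (S *ᵥ v) := by
    simpa using hS.dotProduct_mulVec_pos (x := v) fun h => (hv0 j).ne' (congrFun h j)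
  have hvSv_le : v ⬝ᵥ (S *ᵥ v) ≤ 1 + ∑ i, ∑ j, |S i j| := by
    have h := S.abs_dotProduct_mulVec_le (abs_rpow_one_div_le_one hw hν)
      (abs_rpow_one_div_le_one hw hν)
    linarith [le_abs_self (v ⬝ᵥ (S *ᵥ v))]
  calc extTQuadLower S ν ≤ (v j ^ 2) ^ 2 / (1 + ∑ i, ∑ j, |S i j|) := by
        rw [extTQuadLower, ← pow_mul]; gcongr
    _ ≤ (v ⬝ᵥ v) ^ 2 / v ⬝ᵥ (S *ᵥ v) := by gcongr
    _ ≤ extTQuad S w ν := by rw [div_le_iff₀ hvSv]; exact hS.sq_dotProduct_le v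

lemma exists_hasDerivAt_extTQuad (hw : w ∈ intSimplex k) (hν : 0 < ν) :
    ∃ Q', HasDerivAt (extTQuad S w) Q' ν ∧ |Q'| ≤ 2 / ν * extTQuadUpper S := by
  have hd := HasDerivAt.dotProduct_mulVec
    (fun i => Real.hasDerivAt_rpow_one_div (hw.1 i) hν.ne')
    (fun i => Real.hasDerivAt_rpow_one_div (hw.1 i) hν.ne') S⁻¹
  refine ⟨_, hd, ?_⟩
  have hv' i := Real.abs_rpow_one_div_mul_log_div_le (hw.1 i) (le_one_of_mem_intSimplex hw i) hν
  have h₁ := S⁻¹.abs_dotProduct_mulVec_le hv' (abs_rpow_one_div_le_one hw hν)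
  have h₂ := S⁻¹.abs_dotProduct_mulVec_le (abs_rpow_one_div_le_one hw hν) hv'
  calc _ ≤ _ := abs_add_le _ _
    _ ≤ 1 / ν * 1 * ∑ i, ∑ j, |S⁻¹ i j| + 1 * (1 / ν) * ∑ i, ∑ j, |S⁻¹ i j| :=
        add_le_add h₁ h₂
    _ = 2 / ν * ∑ i, ∑ j, |S⁻¹ i j| := by ring
    _ ≤ 2 / ν * extTQuadUpper S := by rw [extTQuadUpper]; gcongr; linarith

lemma extTQuad_rpow_le (hS : S.PosDef) (hw : w ∈ intSimplex k) (hν : 0 < ν) :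
    extTQuad S w ν ^ (-((k : ℝ) + ν) / 2) ≤ extTQuadRpowBound S ν :=
  Real.rpow_le_rpow_of_nonpos (extTQuadLower_pos S ν) (extTQuadLower_le_extTQuad hS hw hν)
    (by linarith [(k.cast_nonneg : (0 : ℝ) ≤ k)])

lemma exists_hasDerivAt_extTQuad_rpow (hS : S.PosDef) (hw : w ∈ intSimplex k) (hν : 0 < ν) :
    ∃ B', HasDerivAt (fun t => extTQuad S w t ^ (-((k : ℝ) + t) / 2)) B' ν ∧
      |B'| ≤ extTQuadRpowDerivBound S ν := by
  obtain ⟨Q', hQ, hQ'⟩ := exists_hasDerivAt_extTQuad (S := S) hw hν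
  have hlow := extTQuadLower_le_extTQuad hS hw hν
  have he : HasDerivAt (fun t : ℝ => -((k : ℝ) + t) / 2) (-1 / 2) ν :=
    ((hasDerivAt_id' ν).const_add _).neg.div_const 2 |>.congr_deriv (by ring)
  refine ⟨_, hQ.rpow he ((extTQuadLower_pos S ν).trans_le hlow), ?_⟩
  have hk : (0 : ℝ) ≤ k := k.cast_nonneg
  refine (abs_rpow_deriv_le (extTQuadLower_pos S ν) hlow (extTQuad_le_extTQuadUpper hw hν)
    (by linarith)).trans ?_
  have habs_e : |-((k : ℝ) + ν) / 2| = ((k : ℝ) + ν) / 2 := by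
    rw [abs_of_nonpos (by linarith)]; ring
  rw [habs_e, show |(-1 / 2 : ℝ)| = 1 / 2 by norm_num, extTQuadRpowDerivBound,
    extTQuadRpowBound]
  have := Real.rpow_nonneg (extTQuadLower_pos S ν).le (-((k : ℝ) + ν) / 2 - 1)
  gcongr

lemma hExtT_eq_mul (S : Matrix (Fin k) (Fin k) ℝ) (hw : ∀ i, 0 < w i) :
    (fun t => hExtT S t w) = fun t => extTConst k S t * extTQuad S w t ^ (-((k : ℝ) + t) / 2)
      * (∏ i, w i) ^ ((1 - t) / t) := by
  ext t
  rw [hExtT, extTQuad, Real.finsetProd_rpow _ _ fun i _ => (hw i).le]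

end Estimates

lemma exists_hasDerivAt_hExtT {p : Matrix (Fin k) (Fin k) ℝ × ℝ} (hp : p ∈ extTParams k)
    {w : Fin k → ℝ} (hw : w ∈ intSimplex k) :
    ∃ D, HasDerivAt (fun t => hExtT p.1 t w) D p.2 ∧
      ∀ ε, 0 < ε → |D| ≤ extTDerivConst k ε p / ε * ∏ i, w i ^ ((1 - p.2) / p.2 - ε) := by
  obtain ⟨S, ν⟩ := p
  obtain ⟨hS, -, hν : 0 < ν⟩ := hp
  have hW0 : 0 < ∏ i, w i := Finset.prod_pos fun i _ => hw.1 i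
  have hW1 : ∏ i, w i ≤ 1 :=
    Finset.prod_le_one (fun i _ => (hw.1 i).le) fun i _ => le_one_of_mem_intSimplex hw i
  obtain ⟨B', hB, hB'⟩ := exists_hasDerivAt_extTQuad_rpow hS hw hν
  have hD := ((hasDerivAt_extTConst S hν).fun_mul hB).fun_mul
    (Real.hasDerivAt_rpow_one_sub_div hW0 hν.ne')
  rw [← hExtT_eq_mul S hw.1] at hD
  refine ⟨_, hD, fun ε hε => ?_⟩
  have hprod : ∏ i, w i ^ ((1 - ν) / ν - ε) = (∏ i, w i) ^ ((1 - ν) / ν - ε) :=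
    Real.finsetProd_rpow _ _ (fun i _ => (hw.1 i).le) _
  have hP : (∏ i, w i) ^ ((1 - ν) / ν) ≤ (∏ i, w i) ^ ((1 - ν) / ν - ε) :=
    Real.rpow_le_rpow_of_exponent_ge hW0 hW1 (by linarith)
  have hP' : |-((∏ i, w i) ^ ((1 - ν) / ν) * log (∏ i, w i)) / ν ^ 2|
      ≤ (∏ i, w i) ^ ((1 - ν) / ν - ε) / ε / ν ^ 2 := by
    rw [abs_div, abs_neg, abs_mul, abs_of_pos (Real.rpow_pos_of_pos hW0 _),
      abs_of_nonneg (sq_nonneg ν)]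
    gcongr
    exact Real.rpow_mul_abs_log_le hW0 hW1 hε
  have hQ := (extTQuadLower_pos S ν).trans_le (extTQuadLower_le_extTQuad hS hw hν)
  refine (abs_deriv_mul_mul_le (extTConst_pos hS hν).le (Real.rpow_nonneg hQ.le _)
    (extTQuad_rpow_le hS hw hν) hB' (Real.rpow_nonneg hW0.le _) hP hP').trans_eq ?_
  rw [hprod, extTDerivConst]
  field_simp

lemma extTDerivConst_pos {ε : ℝ} (hε : 0 < ε) {p : Matrix (Fin k) (Fin k) ℝ × ℝ}
    (hp : p ∈ extTParams k) : 0 < extTDerivConst k ε p := by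
  obtain ⟨S, ν⟩ := p
  obtain ⟨hS, -, hν : 0 < ν⟩ := hp
  have hA := extTConst_pos hS hν
  have hL := extTQuadLower_pos S ν
  have hU : 0 ≤ extTQuadUpper S := by rw [extTQuadUpper]; positivity
  have hB : 0 < extTQuadRpowBound S ν := by rw [extTQuadRpowBound]; positivity
  have hB' : 0 ≤ extTQuadRpowDerivBound S ν := by rw [extTQuadRpowDerivBound]; positivity
  rw [extTDerivConst]; positivity

lemma continuousOn_extTDerivConst (k : ℕ) (ε : ℝ) :
    ContinuousOn (extTDerivConst k ε) (extTParams k) := by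
  rintro ⟨S, ν⟩ ⟨hS, -, hν : 0 < ν⟩
  refine ContinuousAt.continuousWithinAt ?_
  have hdet : S.det ≠ 0 := hS.det_pos.ne'
  have hF : ContinuousAt (fun q : Matrix (Fin k) (Fin k) ℝ × ℝ => extTNuFactor k q.2) (S, ν) :=
    ((contDiffOn_extTNuFactor k).continuousOn.continuousAt (Ioi_mem_nhds hν)).snd''
  have hF' : ContinuousAt
      (fun q : Matrix (Fin k) (Fin k) ℝ × ℝ => deriv (extTNuFactor k) q.2) (S, ν) :=
    (((contDiffOn_extTNuFactor k).continuousOn_deriv_of_isOpen isOpen_Ioi le_rfl).continuousAt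
      (Ioi_mem_nhds hν)).snd''
  have hsum : Continuous fun M : Matrix (Fin k) (Fin k) ℝ => ∑ i, ∑ j, |M i j| := by fun_prop
  have hU : ContinuousAt (fun q : Matrix (Fin k) (Fin k) ℝ × ℝ => extTQuadUpper q.1) (S, ν) :=
    continuousAt_const.add (hsum.continuousAt.comp (continuousAt_inv_fst hdet))
  have hL : ContinuousAt
      (fun q : Matrix (Fin k) (Fin k) ℝ × ℝ => extTQuadLower q.1 q.2) (S, ν) :=
    ContinuousAt.div (by fun_prop (disch := positivity))
      (continuousAt_const.add (hsum.continuousAt.comp continuousAt_fst)) (by positivity)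
  have hUne : extTQuadUpper S ≠ 0 := by rw [extTQuadUpper]; positivity
  have hLne := (extTQuadLower_pos S ν).ne'
  have hD : ContinuousAt
      (fun q : Matrix (Fin k) (Fin k) ℝ × ℝ => q.1.det ^ (-(1 : ℝ) / 2)) (S, ν) :=
    (continuous_fst.matrix_det.continuousAt).rpow_const (Or.inl hdet)
  have hB : ContinuousAt (fun q : Matrix (Fin k) (Fin k) ℝ × ℝ =>
      extTQuadLower q.1 q.2 ^ (-((k : ℝ) + q.2) / 2)) (S, ν) :=
    hL.rpow (by fun_prop) (Or.inl hLne)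
  have hB₁ : ContinuousAt (fun q : Matrix (Fin k) (Fin k) ℝ × ℝ =>
      extTQuadLower q.1 q.2 ^ (-((k : ℝ) + q.2) / 2 - 1)) (S, ν) :=
    hL.rpow (by fun_prop) (Or.inl hLne)
  unfold extTDerivConst extTQuadRpowDerivBound extTQuadRpowBound
  simp only [extTConst_eq_mul]
  fun_prop (disch := first | assumption | exact Or.inl ‹_› | positivity)

end ExtremalT

/-- bound on `∂_ν` of the extremal-t angular density, Lemma 4 of the
paper.  The partial derivative `∂_ν h_{Σ,ν}(w)` exists and, for every `ε > 0`, there is a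
function `C₄ > 0`, continuous in `(Σ,ν)`, such that
`|∂_ν h_{Σ,ν}(w)| ≤ (C₄(Σ,ν)/ε) ∏ᵢ wᵢ^{(1−ν)/ν − ε}` for all parameters and all
`w ∈ int(S^{k−1})`. -/
theorem stmt16 {k : ℕ} :
    (∀ p ∈ extTParams k, ∀ w ∈ intSimplex k,
      DifferentiableAt ℝ (fun t => hExtT p.1 t w) p.2) ∧
    ∀ ε : ℝ, 0 < ε →
      ∃ C₄ : Matrix (Fin k) (Fin k) ℝ × ℝ → ℝ,
        ContinuousOn C₄ (extTParams k) ∧ (∀ p ∈ extTParams k, 0 < C₄ p) ∧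
        ∀ p ∈ extTParams k, ∀ w ∈ intSimplex k,
          |deriv (fun t => hExtT p.1 t w) p.2|
            ≤ (C₄ p / ε) * ∏ i, (w i) ^ ((1 - p.2) / p.2 - ε) := by
  refine ⟨fun p hp w hw => (exists_hasDerivAt_hExtT hp hw).choose_spec.1.differentiableAt,
    fun ε hε => ⟨extTDerivConst k ε, continuousOn_extTDerivConst k ε,
      fun p hp => extTDerivConst_pos hε hp, fun p hp w hw => ?_⟩⟩
  obtain ⟨D, hD, hbound⟩ := exists_hasDerivAt_hExtT hp hw
  rw [hD.deriv]
  exact hbound ε hε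

end
end
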